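/- If f : F2^n → {0,1} is non-constant when restricted to a coset V, and (C,r) is a 1-parity certificate for f|_V (i.e., {x : Cx = r} ∩ V is nonempty and f ≡ 1 on it), and x' ∈ V satisfies f(x') = 0 with C⊕(f|_V, x') = m, then for the coset V' = V ∩ {x : Cx = Cx'}, we have C⊕(f|_{V'}, x') ≤ m − 1. -/
import Mathlib


/-- The coset `b + V` of `F2^n`. -/
def coset {n : ℕ} (b : Fin n → ZMod 2) (V : Submodule (ZMod 2) (Fin n → ZMod 2)) :
    Set (Fin n → ZMod 2) := {y | y - b ∈ V}

/-- Parity certificate complexity of `f` restricted to the domain `D`, at `x ∈ D`: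
the minimum codimension of a coset `S ∋ x` with `f` constant on `S ∩ D`. -/
noncomputable def pccOn {n : ℕ} (D : Set (Fin n → ZMod 2))
    (f : (Fin n → ZMod 2) → ZMod 2) (x : Fin n → ZMod 2) : ℕ :=
  sInf {c | ∃ b V, x ∈ coset b V ∧ (∀ y ∈ coset b V ∩ D, f y = f x) ∧
    c = n - Module.finrank (ZMod 2) V}

/-- if `f` is non-constant on a coset `V`, `(C, r)` is a 1-parity
certificate for `f|_V`, and `x' ∈ V` has `f x' = 0` with `C⊕(f|_V, x') = m`,
then on `V' = V ∩ {x : Cx = Cx'}` we have `C⊕(f|_{V'}, x') ≤ m - 1`. -/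
theorem stmt11 {n t m : ℕ}
    (f : (Fin n → ZMod 2) → ZMod 2)
    (bV : Fin n → ZMod 2) (W : Submodule (ZMod 2) (Fin n → ZMod 2))
    (V : Set (Fin n → ZMod 2)) (hV : V = coset bV W)
    (hnc : ∃ y ∈ V, ∃ z ∈ V, f y ≠ f z)
    (C : Matrix (Fin t) (Fin n) (ZMod 2)) (r : Fin t → ZMod 2)
    (hne : ({x | C.mulVec x = r} ∩ V).Nonempty)
    (hone : ∀ x ∈ {x | C.mulVec x = r} ∩ V, f x = 1)
    (x' : Fin n → ZMod 2) (hx'V : x' ∈ V) (hx'0 : f x' = 0)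
    (hm : pccOn V f x' = m) :
    pccOn (V ∩ {x | C.mulVec x = C.mulVec x'}) f x' ≤ m - 1 := by
  classical
  subst hV
  set K := LinearMap.ker C.mulVecLin with hK
  have hx'W : x' - bV ∈ W := hx'V
  -- the defining set of `pccOn (coset bV W) f x'` is nonempty and `m` is attained
  have hmem : m ∈ {c | ∃ b U, x' ∈ coset b U ∧
      (∀ y ∈ coset b U ∩ coset bV W, f y = f x') ∧
      c = n - Module.finrank (ZMod 2) U} := by
    rw [← hm]
    apply Nat.sInf_mem
    refine ⟨n, x', ⊥, by simp [coset], ?_, by simp⟩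
    rintro y ⟨hy1, _⟩
    have : y = x' := by
      have : y - x' ∈ (⊥ : Submodule (ZMod 2) (Fin n → ZMod 2)) := hy1
      simpa [sub_eq_zero] using this
    rw [this]
  obtain ⟨b, U, hx'S, hconst, hcm⟩ := hmem
  -- the big subspace is proper
  have hnot : U ⊔ (W ⊓ K) ≠ ⊤ := by
    intro htop
    obtain ⟨x0, hx0C, hx0V⟩ := hne
    have hx0W : x0 - x' ∈ W := by
      have : (x0 - bV) - (x' - bV) ∈ W := Submodule.sub_mem W hx0V hx'W
      simpa using this
    have hw : x0 - x' ∈ U ⊔ (W ⊓ K) := htop ▸ Submodule.mem_top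
    rw [Submodule.mem_sup] at hw
    obtain ⟨u, hu, z, hz, huz⟩ := hw
    have huW : u ∈ W := by
      have : (x0 - x') - z ∈ W := Submodule.sub_mem W hx0W hz.1
      rwa [← huz, add_sub_cancel_right] at this
    have hyS : x' + u ∈ coset b U := by
      show (x' + u) - b ∈ U
      have h := Submodule.add_mem U hu hx'S
      convert h using 1
      abel
    have hyV : x' + u ∈ coset bV W := by
      show (x' + u) - bV ∈ W
      have h := Submodule.add_mem W huW hx'W
      convert h using 1
      abel
    have h0 : f (x' + u) = 0 := by rw [hconst _ ⟨hyS, hyV⟩, hx'0]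
    have hCz : C.mulVec z = 0 := hz.2
    have hCu : C.mulVec u = r - C.mulVec x' := by
      have : C.mulVecLin (u + z) = C.mulVecLin (x0 - x') := by rw [huz]
      simp only [map_add, map_sub, Matrix.mulVecLin_apply] at this
      rw [hCz, add_zero, hx0C] at this
      exact this
    have h1 : f (x' + u) = 1 := by
      refine hone _ ⟨?_, hyV⟩
      show C.mulVec (x' + u) = r
      have : C.mulVecLin (x' + u) = C.mulVecLin x' + C.mulVecLin u := map_add _ _ _
      simp only [Matrix.mulVecLin_apply] at this
      rw [this, hCu]
      abel
    rw [h0] at h1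
    exact zero_ne_one h1
  obtain ⟨v, hv⟩ : ∃ v, v ∉ U ⊔ (W ⊓ K) := by
    by_contra h
    push_neg at h
    exact hnot (Submodule.eq_top_iff'.mpr h)
  have hv0 : v ≠ 0 := fun h => hv (h ▸ Submodule.zero_mem _)
  have hvU : v ∉ U := fun h => hv (Submodule.mem_sup_left h)
  set U' := U ⊔ Submodule.span (ZMod 2) {v} with hU'
  have hinf : U ⊓ Submodule.span (ZMod 2) {v} = ⊥ := by
    rw [Submodule.eq_bot_iff]
    rintro y ⟨hyU, hyS⟩
    obtain ⟨c, rfl⟩ := Submodule.mem_span_singleton.mp hyS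
    rcases eq_or_ne c 0 with rfl | hc
    · simp
    · exfalso
      apply hvU
      have : c⁻¹ • (c • v) ∈ U := Submodule.smul_mem U _ hyU
      rwa [inv_smul_smul₀ hc] at this
  have hrank : Module.finrank (ZMod 2) U' = Module.finrank (ZMod 2) U + 1 := by
    have h := Submodule.finrank_sup_add_finrank_inf_eq U (Submodule.span (ZMod 2) {v})
    rw [hinf, finrank_span_singleton hv0] at h
    simpa using h
  have hle : Module.finrank (ZMod 2) U + 1 ≤ n := by
    have h1 : Module.finrank (ZMod 2) U' ≤
        Module.finrank (ZMod 2) (Fin n → ZMod 2) := Submodule.finrank_le U'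
    rw [hrank, Module.finrank_fin_fun] at h1
    exact h1
  apply Nat.sInf_le
  refine ⟨x', U', by simp [coset], ?_, ?_⟩
  · rintro y ⟨hyS', hyV, hyC⟩
    have hyW : y - x' ∈ W := by
      have : (y - bV) - (x' - bV) ∈ W := Submodule.sub_mem W hyV hx'W
      simpa using this
    have hyK : y - x' ∈ K := by
      show C.mulVecLin (y - x') = 0
      have hyC' : C.mulVec y = C.mulVec x' := hyC
      simp [map_sub, Matrix.mulVecLin_apply, hyC', sub_self]
    have hySU : y - x' ∈ U' := hyS'
    rw [hU', Submodule.mem_sup] at hySU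
    obtain ⟨u, hu, z, hz, huz⟩ := hySU
    obtain ⟨c, rfl⟩ := Submodule.mem_span_singleton.mp hz
    rcases eq_or_ne c 0 with rfl | hc
    · have hyU : y - x' ∈ U := by
        rw [← huz, zero_smul, add_zero]; exact hu
      have hyb : y ∈ coset b U := by
        show y - b ∈ U
        have h := Submodule.add_mem U hyU hx'S
        convert h using 1
        abel
      exact hconst y ⟨hyb, hyV⟩
    · exfalso
      apply hv
      have hcv : c • v ∈ U ⊔ (W ⊓ K) := by
        have : (y - x') - u ∈ U ⊔ (W ⊓ K) :=
          Submodule.sub_mem _ (Submodule.mem_sup_right ⟨hyW, hyK⟩)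
            (Submodule.mem_sup_left hu)
        rwa [← huz, add_sub_cancel_left] at this
      have : c⁻¹ • (c • v) ∈ U ⊔ (W ⊓ K) := Submodule.smul_mem _ _ hcv
      rwa [inv_smul_smul₀ hc] at this
  · rw [hrank]
    omega
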